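/- Let α, β, γ, λ, μ be real numbers and let N(α,β,γ,λ,μ) be the 3×3 real matrix whose rows are (α,β,γ), (λα,λβ,λγ), (μα,μβ,μγ). Suppose α ≠ 0, α² + λβ² + μγ² ≠ 0, λ > 0 and μ > 0. Then the evolution algebra E_{N(α,β,γ,λ,μ)} is isomorphic to the evolution algebra E₇ whose structure matrix has rows (1,0,0), (1,0,0), (1,0,0). -/

import Mathlib

/-- Evolution algebra multiplication on ℝ³ determined by a structure matrix `A`:
`(x ∗_A y) j = ∑ i, x i * y i * A i j`. -/
def evolMul (A : Matrix (Fin 3) (Fin 3) ℝ) (x y : Fin 3 → ℝ) : Fin 3 → ℝ :=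
  fun j => ∑ i, x i * y i * A i j

/-- The evolution algebras with structure matrices `A` and `B` are isomorphic:
there is an ℝ-linear equivalence of ℝ³ intertwining the two multiplications. -/
def EvolIso (A B : Matrix (Fin 3) (Fin 3) ℝ) : Prop :=
  ∃ f : (Fin 3 → ℝ) ≃ₗ[ℝ] (Fin 3 → ℝ),
    ∀ x y, f (evolMul A x y) = evolMul B (f x) (f y)

/-!
Both structure matrices have rank one: `N = d vᵀ` with `d = (1, λ, μ)` and `v = (α, β, γ)`,
so `x ∗ y = B(x, y) v` for the positive definite form `B(x, y) = ∑ dᵢ xᵢ yᵢ`, while in `E₇`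
`x ∗ y = (x ⬝ y) e₁`. Hence any linear equivalence `f` with `f x ⬝ f y = κ B(x, y)` and
`f v = κ e₁` is an isomorphism. Take `f = ‖g v‖ • R ∘ g`, where `g = diag(√dᵢ)` turns `B`
into the Euclidean inner product and `R` is the reflection sending `g v` to `‖g v‖ e₁`; then
`κ = ‖g v‖² = α² + λβ² + μγ²`, which is nonzero by hypothesis.
-/

open Matrix

lemma evolMul_vecMulVec (d v x y : Fin 3 → ℝ) :
    evolMul (vecMulVec d v) x y = (∑ i, d i * x i * y i) • v := by
  ext j
  simp only [evolMul, vecMulVec_apply, Pi.smul_apply, smul_eq_mul, Finset.sum_mul]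
  exact Finset.sum_congr rfl fun i _ => by ring

lemma evolIso_vecMulVec {d v d' w : Fin 3 → ℝ} (f : (Fin 3 → ℝ) ≃ₗ[ℝ] (Fin 3 → ℝ)) (κ : ℝ)
    (hf : ∀ x y, ∑ i, d' i * f x i * f y i = κ * ∑ i, d i * x i * y i)
    (hv : f v = κ • w) :
    EvolIso (vecMulVec d v) (vecMulVec d' w) :=
  ⟨f, fun x y => by
    rw [evolMul_vecMulVec, evolMul_vecMulVec, map_smul, hv, hf, smul_smul, mul_comm]⟩

section
variable {ι : Type*}

noncomputable def sqrtWeightEquiv (d : ι → ℝ) (hd : ∀ i, 0 < d i) :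
    (ι → ℝ) ≃ₗ[ℝ] EuclideanSpace ℝ ι :=
  (LinearEquiv.piCongrRight fun i =>
      LinearEquiv.smulOfNeZero ℝ ℝ (√(d i)) (Real.sqrt_pos.2 (hd i)).ne').trans
    (WithLp.linearEquiv 2 ℝ (ι → ℝ)).symm

lemma sqrtWeightEquiv_apply (d : ι → ℝ) (hd : ∀ i, 0 < d i) (x : ι → ℝ) (i : ι) :
    sqrtWeightEquiv d hd x i = √(d i) * x i := rfl

lemma inner_sqrtWeightEquiv [Fintype ι] (d : ι → ℝ) (hd : ∀ i, 0 < d i) (x y : ι → ℝ) :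
    inner ℝ (sqrtWeightEquiv d hd x) (sqrtWeightEquiv d hd y) = ∑ i, d i * x i * y i := by
  simp only [PiLp.inner_apply, sqrtWeightEquiv_apply, RCLike.inner_apply, conj_trivial]
  refine Finset.sum_congr rfl fun i _ => ?_
  linear_combination x i * y i * Real.mul_self_sqrt (hd i).le

end

lemma exists_linearIsometryEquiv_apply_eq_norm_smul {E : Type*} [NormedAddCommGroup E]
    [InnerProductSpace ℝ E] (v e : E) (he : ‖e‖ = 1) :
    ∃ R : E ≃ₗᵢ[ℝ] E, R v = ‖v‖ • e :=
  ⟨_, Submodule.reflection_sub (by rw [norm_smul, he, mul_one, norm_norm])⟩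

lemma evolIso_vecMulVec_one_single {d v : Fin 3 → ℝ} (hd : ∀ i, 0 < d i) (hv : v ≠ 0) :
    EvolIso (vecMulVec d v) (vecMulVec 1 (Pi.single 0 1)) := by
  let g := sqrtWeightEquiv d hd
  have hc : ‖g v‖ ≠ 0 := norm_ne_zero_iff.2 ((map_ne_zero_iff g g.injective).2 hv)
  obtain ⟨R, hR⟩ := exists_linearIsometryEquiv_apply_eq_norm_smul (g v)
    (EuclideanSpace.single (0 : Fin 3) (1 : ℝ)) (by simp)
  let f := ((g.trans R.toLinearEquiv).trans (LinearEquiv.smulOfNeZero ℝ _ _ hc)).trans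
    (WithLp.linearEquiv 2 ℝ (Fin 3 → ℝ))
  have f_apply (x : Fin 3 → ℝ) : f x = ‖g v‖ • WithLp.ofLp (R (g x)) := rfl
  refine evolIso_vecMulVec f (‖g v‖ ^ 2) (fun x y => ?_) ?_
  · rw [← inner_sqrtWeightEquiv d hd, ← R.inner_map_map, PiLp.inner_apply, Finset.mul_sum]
    refine Finset.sum_congr rfl fun i _ => ?_
    simp only [f_apply, Pi.one_apply, Pi.smul_apply, smul_eq_mul, RCLike.inner_apply,
      conj_trivial]
    ring
  · rw [f_apply, hR, WithLp.ofLp_smul, PiLp.ofLp_single, smul_smul, ← sq]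

theorem stmt_general (a b c l m : ℝ)
    (hq : a ^ 2 + l * b ^ 2 + m * c ^ 2 ≠ 0)
    (hl : l > 0) (hm : m > 0) :
    EvolIso (!![a, b, c; l * a, l * b, l * c; m * a, m * b, m * c] : Matrix (Fin 3) (Fin 3) ℝ) (!![1, 0, 0; 1, 0, 0; 1, 0, 0] : Matrix (Fin 3) (Fin 3) ℝ) := by
  have hN : !![a, b, c; l * a, l * b, l * c; m * a, m * b, m * c] =
      vecMulVec ![1, l, m] ![a, b, c] := by
    ext i j; fin_cases i <;> fin_cases j <;> simp [vecMulVec]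
  have hE₇ : !![(1 : ℝ), 0, 0; 1, 0, 0; 1, 0, 0] = vecMulVec 1 (Pi.single 0 1) := by
    ext i j; fin_cases i <;> fin_cases j <;> simp [vecMulVec]
  rw [hN, hE₇]
  refine evolIso_vecMulVec_one_single (fun i => by fin_cases i <;> simp [hl, hm]) ?_
  intro hv
  obtain ⟨rfl, rfl, rfl⟩ : a = 0 ∧ b = 0 ∧ c = 0 :=
    ⟨congrFun hv 0, congrFun hv 1, congrFun hv 2⟩
  simp at hq

theorem stmt (a b c l m : ℝ)
    (ha : a ≠ 0) (hq : a ^ 2 + l * b ^ 2 + m * c ^ 2 ≠ 0)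
    (hl : l > 0) (hm : m > 0) :
    EvolIso (!![a, b, c; l * a, l * b, l * c; m * a, m * b, m * c] : Matrix (Fin 3) (Fin 3) ℝ) (!![1, 0, 0; 1, 0, 0; 1, 0, 0] : Matrix (Fin 3) (Fin 3) ℝ) :=
  stmt_general a b c l m hq hl hm
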